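/- Let G be a planar graph with minimum degree δ(G) = 5. Then the Roman bondage number satisfies b_R(G) ≤ 14. -/

import Mathlib

open SimpleGraph Finset

variable {V : Type*} [Fintype V] [DecidableEq V]

/-- The number of orbits (cycles together with fixed points) of a permutation of a finite type. -/
noncomputable def permNumOrbits {α : Type*} [Fintype α] [DecidableEq α] (ψ : Equiv.Perm α) : ℕ :=
  Multiset.card ψ.cycleType + (Finset.univ.filter fun a => ψ a = a).card

/-- A combinatorial (2-cell) embedding scheme of a graph on a surface:
a rotation system together with an edge signature (Mohar–Thomassen). -/
structure SimpleGraph.EmbeddingScheme (G : SimpleGraph V) [DecidableRel G.Adj] where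
  rot : Equiv.Perm G.Dart
  rot_fst : ∀ d : G.Dart, (rot d).toProd.1 = d.toProd.1
  rot_cyclic : ∀ d e : G.Dart, d.toProd.1 = e.toProd.1 → ∃ k : ℕ, (rot ^ k) d = e
  sign : G.Dart → ℤˣ
  sign_symm : ∀ d : G.Dart, sign d.symm = sign d

namespace SimpleGraph.EmbeddingScheme

variable {G : SimpleGraph V} [DecidableRel G.Adj] (S : G.EmbeddingScheme)

def swapPerm : Equiv.Perm (G.Dart × ℤˣ) :=
  Function.Involutive.toPerm (fun p => (p.1.symm, p.2 * S.sign p.1)) (by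
    intro p
    simp [SimpleGraph.Dart.symm_symm, S.sign_symm p.1, mul_assoc, Int.units_mul_self])

def rotPerm : Equiv.Perm (G.Dart × ℤˣ) where
  toFun p := ((S.rot ^ (p.2 : ℤ)) p.1, p.2)
  invFun p := ((S.rot ^ (-(p.2 : ℤ))) p.1, p.2)
  left_inv p := by
    simp [← Equiv.Perm.mul_apply, ← zpow_add]
  right_inv p := by
    obtain ⟨d, s⟩ := p
    show ((S.rot ^ (s : ℤ)) ((S.rot ^ (-(s : ℤ))) d), s) = (d, s)
    rw [← Equiv.Perm.mul_apply (S.rot ^ (s : ℤ)), ← zpow_add, add_neg_cancel, zpow_zero,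
      Equiv.Perm.one_apply]

/-- The face-tracing permutation on signed darts. -/
def faceMap : Equiv.Perm (G.Dart × ℤˣ) := S.swapPerm.trans S.rotPerm

/-- Each face is traced by exactly two orbits of the face-tracing permutation. -/
noncomputable def numFaces : ℕ := permNumOrbits S.faceMap / 2

/-- The Euler characteristic of the closed surface determined by the scheme. -/
noncomputable def eulerChar : ℤ :=
  (Fintype.card V : ℤ) - (G.edgeFinset.card : ℤ) + (S.numFaces : ℤ)

/-- The scheme describes an embedding on an orientable surface iff its signature
is switching-equivalent to the all-positive signature. -/
def IsOrientable : Prop := ∃ θ : V → ℤˣ, ∀ d : G.Dart, S.sign d = θ d.toProd.1 * θ d.toProd.2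

end SimpleGraph.EmbeddingScheme

/-- `G` has orientable genus `g`. -/
def SimpleGraph.HasOrientableGenus (G : SimpleGraph V) [DecidableRel G.Adj] (g : ℕ) : Prop :=
  (∃ S : G.EmbeddingScheme, S.IsOrientable ∧ S.eulerChar = 2 - 2 * (g : ℤ)) ∧
  ∀ g' : ℕ, g' < g → ¬ ∃ S : G.EmbeddingScheme, S.IsOrientable ∧ S.eulerChar = 2 - 2 * (g' : ℤ)

/-- `G` has nonorientable genus `k`. -/
def SimpleGraph.HasNonorientableGenus (G : SimpleGraph V) [DecidableRel G.Adj] (k : ℕ) : Prop :=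
  (∃ S : G.EmbeddingScheme, ¬ S.IsOrientable ∧ S.eulerChar = 2 - (k : ℤ)) ∧
  ∀ k' : ℕ, k' < k → ¬ ∃ S : G.EmbeddingScheme, ¬ S.IsOrientable ∧ S.eulerChar = 2 - (k' : ℤ)

/-- `G` is planar: every component embeds in the sphere. -/
def SimpleGraph.IsPlanar (G : SimpleGraph V) [DecidableRel G.Adj] : Prop :=
  ∃ S : G.EmbeddingScheme, S.IsOrientable ∧
    S.eulerChar = 2 * (Nat.card G.ConnectedComponent : ℤ)

/-- `S` is a total dominating set: every vertex has a neighbour in `S`. -/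
def SimpleGraph.IsTotalDominatingSet (G : SimpleGraph V) (S : Finset V) : Prop :=
  ∀ v : V, ∃ u ∈ S, G.Adj u v

noncomputable def SimpleGraph.totalDominationNumber (G : SimpleGraph V) : ℕ :=
  sInf {k : ℕ | ∃ S : Finset V, G.IsTotalDominatingSet S ∧ S.card = k}

/-- The spanning subgraph of `G` keeping only edges meeting `S`. -/
def SimpleGraph.weakSubgraph (G : SimpleGraph V) (S : Finset V) : SimpleGraph V where
  Adj u v := G.Adj u v ∧ (u ∈ S ∨ v ∈ S)
  symm := by
    constructor
    intro u v h
    exact ⟨h.1.symm, h.2.symm⟩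
  loopless := by
    constructor
    intro v h
    exact h.1.ne rfl

/-- `S` is a weakly connected dominating set. -/
def SimpleGraph.IsWeaklyConnectedDominatingSet (G : SimpleGraph V) (S : Finset V) : Prop :=
  S.Nonempty ∧ (G.weakSubgraph S).Connected

noncomputable def SimpleGraph.weaklyConnectedDominationNumber (G : SimpleGraph V) : ℕ :=
  sInf {k : ℕ | ∃ S : Finset V, G.IsWeaklyConnectedDominatingSet S ∧ S.card = k}

/-- `S` is a connected dominating set. -/
def SimpleGraph.IsConnectedDominatingSet (G : SimpleGraph V) (S : Finset V) : Prop :=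
  (∀ v ∉ S, ∃ u ∈ S, G.Adj u v) ∧ (G.induce (S : Set V)).Connected

noncomputable def SimpleGraph.connectedDominationNumber (G : SimpleGraph V) : ℕ :=
  sInf {k : ℕ | ∃ S : Finset V, G.IsConnectedDominatingSet S ∧ S.card = k}

/-- `S` is a restrained dominating set. -/
def SimpleGraph.IsRestrainedDominatingSet (G : SimpleGraph V) (S : Finset V) : Prop :=
  ∀ v ∉ S, (∃ u ∈ S, G.Adj u v) ∧ (∃ w ∉ S, G.Adj w v)

noncomputable def SimpleGraph.restrainedDominationNumber (G : SimpleGraph V) : ℕ :=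
  sInf {k : ℕ | ∃ S : Finset V, G.IsRestrainedDominatingSet S ∧ S.card = k}

/-- The restrained bondage number. -/
noncomputable def SimpleGraph.restrainedBondageNumber (G : SimpleGraph V) : ℕ :=
  sInf {k : ℕ | ∃ F : Finset (Sym2 V), ↑F ⊆ G.edgeSet ∧ F.card = k ∧
    G.restrainedDominationNumber < (G.deleteEdges ↑F).restrainedDominationNumber}

/-- `S` is a total restrained dominating set. -/
def SimpleGraph.IsTotalRestrainedDominatingSet (G : SimpleGraph V) (S : Finset V) : Prop :=
  (∀ v : V, ∃ u ∈ S, G.Adj u v) ∧ ∀ v ∉ S, ∃ w ∉ S, G.Adj w v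

noncomputable def SimpleGraph.totalRestrainedDominationNumber (G : SimpleGraph V) : ℕ :=
  sInf {k : ℕ | ∃ S : Finset V, G.IsTotalRestrainedDominatingSet S ∧ S.card = k}

/-- The total restrained bondage number (`⊤` if no suitable edge set exists). -/
noncomputable def SimpleGraph.totalRestrainedBondageNumber (G : SimpleGraph V) : ℕ∞ :=
  sInf {k : ℕ∞ | ∃ F : Finset (Sym2 V), ↑F ⊆ G.edgeSet ∧ (F.card : ℕ∞) = k ∧
    (∀ v : V, ∃ u : V, (G.deleteEdges ↑F).Adj u v) ∧
    G.totalRestrainedDominationNumber < (G.deleteEdges ↑F).totalRestrainedDominationNumber}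

/-- Roman dominating function. -/
def SimpleGraph.IsRomanDominatingFunction (G : SimpleGraph V) (f : V → ℕ) : Prop :=
  (∀ v : V, f v ≤ 2) ∧ ∀ v : V, f v = 0 → ∃ u : V, G.Adj u v ∧ f u = 2

noncomputable def SimpleGraph.romanDominationNumber (G : SimpleGraph V) : ℕ :=
  sInf {k : ℕ | ∃ f : V → ℕ, G.IsRomanDominatingFunction f ∧ ∑ v : V, f v = k}

noncomputable def SimpleGraph.romanBondageNumber (G : SimpleGraph V) : ℕ :=
  sInf {k : ℕ | ∃ F : Finset (Sym2 V), ↑F ⊆ G.edgeSet ∧ F.card = k ∧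
    G.romanDominationNumber < (G.deleteEdges ↑F).romanDominationNumber}

/-- The minimum edge-degree `ξ(G)`. -/
noncomputable def SimpleGraph.minEdgeDegree (G : SimpleGraph V) [DecidableRel G.Adj] : ℕ :=
  sInf {k : ℕ | ∃ d : G.Dart, G.degree d.toProd.1 + G.degree d.toProd.2 - 2 = k}

/-- A restricted edge-cut: removing it disconnects `G` leaving no isolated vertex. -/
def SimpleGraph.IsRestrictedEdgeCut (G : SimpleGraph V) (F : Finset (Sym2 V)) : Prop :=
  ↑F ⊆ G.edgeSet ∧ ¬ (G.deleteEdges ↑F).Connected ∧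
    ∀ v : V, ∃ u : V, (G.deleteEdges ↑F).Adj u v

/-- The restricted edge-connectivity `λ'(G)`. -/
noncomputable def SimpleGraph.restrictedEdgeConnectivity (G : SimpleGraph V) : ℕ :=
  sInf {k : ℕ | ∃ F : Finset (Sym2 V), G.IsRestrictedEdgeCut F ∧ F.card = k}

/-- `G` is a star: all edges share a common vertex. -/
def SimpleGraph.IsStar (G : SimpleGraph V) : Prop :=
  ∃ c : V, ∀ e ∈ G.edgeSet, c ∈ e

/-- The average degree `2|E|/|V|` of `G`. -/
noncomputable def SimpleGraph.averageDegree (G : SimpleGraph V) [DecidableRel G.Adj] : ℝ :=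
  2 * (G.edgeFinset.card : ℝ) / (Fintype.card V : ℝ)

def h1 (x : ℕ) : ℕ := if x ≤ 3 then 2 * x + 13 else 4 * x + 7
def h2 (x : ℕ) : ℕ := if x = 0 then 8 else 4 * x + 5
def k1 (x : ℕ) : ℕ := if x ≤ 2 then 2 * x + 11 else if x ≤ 5 then 2 * x + 9 else 2 * x + 7
def k2 (x : ℕ) : ℕ := if x = 1 then 8 else 2 * x + 5

/-!
Faces of a planar graph of minimum degree at least `2` have length at least `3`, so Euler's
formula gives `|E| ≤ 3|V| - 6`: the average degree is below `6`. When `δ = 5`, discharging then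
finds a path `xyz` with `deg x + deg y + deg z ≤ 17`: start with charge `4 deg v - 24` (negative in
total) and let every vertex of degree at least `7` send `1` to each neighbour of degree `5`; if no
such path existed, every final charge would be nonnegative. Finally (Rad–Volkmann), deleting all
edges at `x`, `y`, `z` except `yz` forces every Roman dominating function to spend `3` on
`{x, y, z}`, whereas `G` dominates them with weight `2` at `y`; so `b_R(G) ≤ 17 - 3`.
-/

namespace SimpleGraph

variable {V : Type*} [Fintype V]

theorem exists_isRomanDominatingFunction_sum_eq (G : SimpleGraph V) :
    ∃ f : V → ℕ, G.IsRomanDominatingFunction f ∧ ∑ v, f v = G.romanDominationNumber :=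
  Nat.sInf_mem (s := {k | ∃ f : V → ℕ, G.IsRomanDominatingFunction f ∧ ∑ v, f v = k})
    ⟨_, fun _ => 1, ⟨fun _ => one_le_two, fun _ h => absurd h one_ne_zero⟩, rfl⟩

theorem IsRomanDominatingFunction.romanDominationNumber_le {G : SimpleGraph V} {f : V → ℕ}
    (hf : G.IsRomanDominatingFunction f) : G.romanDominationNumber ≤ ∑ v, f v :=
  Nat.sInf_le ⟨f, hf, rfl⟩

theorem romanBondageNumber_le_card {G : SimpleGraph V} {F : Finset (Sym2 V)}
    (hF : ↑F ⊆ G.edgeSet)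
    (hlt : G.romanDominationNumber < (G.deleteEdges ↑F).romanDominationNumber) :
    G.romanBondageNumber ≤ F.card :=
  Nat.sInf_le ⟨F, hF, rfl, hlt⟩

theorem romanDominationNumber_lt_of_isolated_path {G H : SimpleGraph V} (hle : H ≤ G) {x y z : V}
    (hxy : G.Adj x y) (hyz : G.Adj y z) (hxz : x ≠ z) (hx : ∀ a, ¬ H.Adj a x)
    (hy : ∀ a, H.Adj a y → a = z) (hz : ∀ a, H.Adj a z → a = y) :
    G.romanDominationNumber < H.romanDominationNumber := by
  classical
  obtain ⟨g, ⟨hg_le, hg_dom⟩, hg_sum⟩ := H.exists_isRomanDominatingFunction_sum_eq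
  have hgx : 1 ≤ g x := Nat.one_le_iff_ne_zero.2 fun h => (hg_dom x h).elim fun a ha => hx a ha.1
  have hgyz : 2 ≤ g y + g z := by
    by_cases hy0 : g y = 0
    · obtain ⟨a, ha, ha2⟩ := hg_dom y hy0
      rw [hy a ha] at ha2
      omega
    by_cases hz0 : g z = 0
    · obtain ⟨a, ha, ha2⟩ := hg_dom z hz0
      rw [hz a ha] at ha2
      omega
    omega
  set g' : V → ℕ := fun v => if v = y then 2 else if v = x ∨ v = z then 0 else g v with hg'
  have hg'_eq : ∀ v ∉ ({x, y, z} : Finset V), g' v = g v := by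
    intro v hv
    simp only [mem_insert, mem_singleton, not_or] at hv
    simp [hg', hv.1, hv.2.1, hv.2.2]
  have hg'_rdf : G.IsRomanDominatingFunction g' := by
    refine ⟨fun v => ?_, fun v hv => ?_⟩
    · simp only [hg']
      split_ifs <;> simp [hg_le v]
    by_cases hvy : v = y
    · simp [hg', hvy] at hv
    by_cases hvxz : v = x ∨ v = z
    · refine ⟨y, ?_, by simp [hg']⟩
      rcases hvxz with rfl | rfl
      exacts [hxy.symm, hyz]
    rw [not_or] at hvxz
    have hvs : v ∉ ({x, y, z} : Finset V) := by simp [hvy, hvxz.1, hvxz.2]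
    obtain ⟨a, ha, ha2⟩ := hg_dom v (by rwa [← hg'_eq v hvs])
    have has : a ∉ ({x, y, z} : Finset V) := by
      simp only [mem_insert, mem_singleton, not_or]
      exact ⟨fun h => hx v (h ▸ ha.symm), fun h => hvxz.2 (hy v (h ▸ ha.symm)),
        fun h => hvy (hz v (h ▸ ha.symm))⟩
    exact ⟨a, hle ha, by rw [hg'_eq a has, ha2]⟩
  have hsum : ∑ v, g' v + (g x + g y + g z) = ∑ v, g v + 2 := by
    have hxy' := hxy.ne
    have hyz' := hyz.ne
    rw [← sum_add_sum_compl {x, y, z} g', ← sum_add_sum_compl {x, y, z} g,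
      sum_congr rfl fun v hv => hg'_eq v (mem_compl.1 hv)]
    simp only [hg', mem_insert, mem_singleton, sum_insert, sum_singleton, compl_insert, hxy',
      hxz, hyz', hyz'.symm, or_self, or_false, or_true, not_false_eq_true, ↓reduceIte, add_zero,
      zero_add]
    omega
  calc G.romanDominationNumber ≤ ∑ v, g' v := hg'_rdf.romanDominationNumber_le
    _ < ∑ v, g v := by omega
    _ = H.romanDominationNumber := hg_sum

theorem romanBondageNumber_le_degree_add_degree_add_degree_sub_three {G : SimpleGraph V}
    [DecidableRel G.Adj] {x y z : V} (hxy : G.Adj x y) (hyz : G.Adj y z) (hxz : x ≠ z) :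
    G.romanBondageNumber ≤ G.degree x + G.degree y + G.degree z - 3 := by
  classical
  set F := G.incidenceFinset x ∪ (G.incidenceFinset y \ {s(x, y), s(y, z)}) ∪
    (G.incidenceFinset z \ {s(y, z)}) with hF
  have hF_sub : ↑F ⊆ G.edgeSet := by
    intro e he
    simp only [hF, coe_union, coe_sdiff, Set.mem_union, Set.mem_sdiff, mem_coe,
      mem_incidenceFinset] at he
    rcases he with (h | h) | h
    exacts [h.1, h.1.1, h.1.1]
  have hinc : ∀ {a b}, G.Adj a b → s(a, b) ∈ G.incidenceFinset a ∧ s(a, b) ∈ G.incidenceFinset b :=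
    fun h => ⟨(mem_incidenceFinset ..).2 (G.mk'_mem_incidenceSet_left_iff.2 h),
      (mem_incidenceFinset ..).2 (G.mk'_mem_incidenceSet_right_iff.2 h)⟩
  have hcard : F.card + 3 ≤ G.degree x + G.degree y + G.degree z := by
    have hpair : ({s(x, y), s(y, z)} : Finset (Sym2 V)).card = 2 :=
      card_pair (by simp [hxz, hxy.ne])
    have hy := card_sdiff_add_card_eq_card (s := ({s(x, y), s(y, z)} : Finset (Sym2 V)))
      (insert_subset_iff.2 ⟨(hinc hxy).2, singleton_subset_iff.2 (hinc hyz).1⟩)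
    have hz := card_sdiff_add_card_eq_card (singleton_subset_iff.2 (hinc hyz).2)
    rw [hpair, card_incidenceFinset_eq_degree] at hy
    rw [card_singleton, card_incidenceFinset_eq_degree] at hz
    have hunion : #F ≤ #(G.incidenceFinset x) + #(G.incidenceFinset y \ {s(x, y), s(y, z)}) +
        #(G.incidenceFinset z \ {s(y, z)}) :=
      (card_union_le _ _).trans (Nat.add_le_add_right (card_union_le _ _) _)
    rw [card_incidenceFinset_eq_degree] at hunion
    omega
  have hlt : G.romanDominationNumber < (G.deleteEdges ↑F).romanDominationNumber := by
    refine romanDominationNumber_lt_of_isolated_path (deleteEdges_le _) hxy hyz hxz (fun a ha => ?_)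
      (fun a ha => ?_) (fun a ha => ?_) <;> rw [deleteEdges_adj] at ha <;> by_contra hne <;> apply ha.2
    · exact mem_union_left _ (mem_union_left _ (hinc ha.1).2)
    · by_cases hax : a = x
      · exact mem_union_left _ (mem_union_left _ (hax ▸ (hinc ha.1).1))
      · refine mem_union_left _ (mem_union_right _ (mem_sdiff.2 ⟨(hinc ha.1).2, ?_⟩))
        simp [hax, hne, ha.1.ne]
    · refine mem_union_right _ (mem_sdiff.2 ⟨(hinc ha.1).2, ?_⟩)
      simp [hne, ha.1.ne]
  have := romanBondageNumber_le_card hF_sub hlt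
  omega

end SimpleGraph

namespace Equiv.Perm

variable {α : Type*} [Fintype α] [DecidableEq α]

theorem three_le_of_mem_cycleType {σ : Perm α} (hσ : ∀ a, σ (σ a) ≠ a) {n : ℕ}
    (hn : n ∈ σ.cycleType) : 3 ≤ n := by
  simp only [cycleType_def, ← Finset.mem_def, Function.comp_apply, Multiset.mem_map,
    mem_cycleFactorsFinset_iff] at hn
  obtain ⟨c, ⟨hc, hcσ⟩, rfl⟩ := hn
  by_contra! hlt
  obtain ⟨a, b, hab, rfl⟩ :=
    card_support_eq_two.1 (le_antisymm (Nat.le_of_lt_succ hlt) hc.two_le_card_support)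
  apply hσ a
  rw [← hcσ a (by simp [hab]), swap_apply_left, ← hcσ b (by simp [hab]), swap_apply_right]

theorem three_mul_permNumOrbits_le_card {σ : Perm α} (hσ : ∀ a, σ (σ a) ≠ a) :
    3 * permNumOrbits σ ≤ Fintype.card α := by
  have hfix : (univ.filter fun a => σ a = a) = ∅ :=
    filter_false_of_mem fun a _ h => hσ a (by rw [h, h])
  have hsupp : σ.support = univ :=
    eq_univ_of_forall fun a => mem_support.2 fun h => hσ a (by rw [h, h])
  have := Multiset.card_nsmul_le_sum fun n hn => three_le_of_mem_cycleType hσ hn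
  rw [sum_cycleType, hsupp, card_univ, smul_eq_mul] at this
  rwa [permNumOrbits, hfix, card_empty, add_zero, mul_comm]

end Equiv.Perm

namespace SimpleGraph.EmbeddingScheme

variable {V : Type*} {G : SimpleGraph V} [DecidableRel G.Adj] (S : G.EmbeddingScheme)

theorem fst_rot_zpow (k : ℤ) (d : G.Dart) : ((S.rot ^ k) d).fst = d.fst := by
  induction k using Int.induction_on generalizing d with
  | zero => rfl
  | succ k ih => rw [zpow_add_one, Equiv.Perm.mul_apply, ih, S.rot_fst]
  | pred k ih =>
    rw [zpow_sub_one, Equiv.Perm.mul_apply, ih, ← S.rot_fst (S.rot⁻¹ d),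
      ← Equiv.Perm.mul_apply, mul_inv_cancel, Equiv.Perm.one_apply]

theorem eq_of_rot_eq_self {d e : G.Dart} (hd : S.rot d = d) (he : e.fst = d.fst) : e = d := by
  obtain ⟨k, rfl⟩ := S.rot_cyclic d e he.symm
  exact Equiv.Perm.pow_apply_eq_self_of_apply_eq_self hd k

theorem rot_eq_self_of_zpow_units_eq_self (u : ℤˣ) {d : G.Dart}
    (h : (S.rot ^ (u : ℤ)) d = d) : S.rot d = d := by
  rcases Int.units_eq_one_or u with rfl | rfl
  · simpa using h
  · rw [Units.val_neg, Units.val_one, zpow_neg_one, Equiv.Perm.inv_eq_iff_eq] at h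
    exact h.symm

theorem faceMap_apply (d : G.Dart) (u : ℤˣ) :
    S.faceMap (d, u) = ((S.rot ^ ((u * S.sign d : ℤˣ) : ℤ)) d.symm, u * S.sign d) :=
  rfl

variable [Fintype V]

theorem rot_ne_self {d : G.Dart} (h : 1 < G.degree d.fst) : S.rot d ≠ d := by
  intro hd
  rw [← card_neighborFinset_eq_degree] at h
  obtain ⟨w₁, hw₁, w₂, hw₂, hne⟩ := one_lt_card.1 h
  rw [mem_neighborFinset] at hw₁ hw₂
  have h₁ := S.eq_of_rot_eq_self (e := ⟨(d.fst, w₁), hw₁⟩) hd rfl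
  have h₂ := S.eq_of_rot_eq_self (e := ⟨(d.fst, w₂), hw₂⟩) hd rfl
  exact hne (congrArg (·.snd) (h₁.trans h₂.symm))

/-- That is, every face has length at least `3`. -/
theorem faceMap_faceMap_ne_self (hdeg : ∀ v, 1 < G.degree v) (p : G.Dart × ℤˣ) :
    S.faceMap (S.faceMap p) ≠ p := by
  obtain ⟨d, u⟩ := p
  set e := (S.rot ^ ((u * S.sign d : ℤˣ) : ℤ)) d.symm with he
  intro h
  rw [faceMap_apply, faceMap_apply, ← he, Prod.mk.injEq] at h
  have he_fst : e.fst = d.snd := S.fst_rot_zpow _ _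
  have he_snd : e.snd = d.fst := by rw [← h.1, fst_rot_zpow]; rfl
  have he_symm : e = d.symm := Dart.ext _ _ (Prod.ext he_fst he_snd)
  exact S.rot_ne_self (hdeg _) (S.rot_eq_self_of_zpow_units_eq_self _ (he ▸ he_symm))

theorem three_mul_numFaces_le [DecidableEq V] (hdeg : ∀ v, 1 < G.degree v) :
    3 * S.numFaces ≤ 2 * #G.edgeFinset := by
  have := Equiv.Perm.three_mul_permNumOrbits_le_card (S.faceMap_faceMap_ne_self hdeg)
  rw [Fintype.card_prod, dart_card_eq_twice_card_edges, Fintype.card_units_int] at this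
  rw [numFaces]
  omega

end SimpleGraph.EmbeddingScheme

namespace SimpleGraph

theorem IsPlanar.card_edgeFinset_add_six_le {V : Type*} [Fintype V] [DecidableEq V] [Nonempty V]
    {G : SimpleGraph V} [DecidableRel G.Adj] (hG : G.IsPlanar) (hdeg : ∀ v, 1 < G.degree v) :
    #G.edgeFinset + 6 ≤ 3 * Fintype.card V := by
  obtain ⟨S, -, hS⟩ := hG
  have hfaces := S.three_mul_numFaces_le hdeg
  have hcomp : 1 ≤ Nat.card G.ConnectedComponent := Nat.card_pos
  rw [EmbeddingScheme.eulerChar] at hS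
  omega

variable {V : Type*} [Fintype V] (G : SimpleGraph V) [DecidableRel G.Adj]

def SendsCharge (v u : V) : Prop :=
  G.Adj v u ∧ 7 ≤ G.degree v ∧ G.degree u = 5

instance : DecidableRel G.SendsCharge := fun _ _ => inferInstanceAs (Decidable (_ ∧ _ ∧ _))

variable {G}

theorem card_neighborFinset_filter_degree_le_le_one
    (hheavy : ∀ x y z, G.Adj x y → G.Adj y z → x ≠ z → 17 < G.degree x + G.degree y + G.degree z)
    {v : V} {k : ℕ} (hk : 2 * k + G.degree v ≤ 17) :
    #{u ∈ G.neighborFinset v | G.degree u ≤ k} ≤ 1 := by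
  refine card_le_one.2 fun a ha b hb => by_contra fun hab => ?_
  simp only [mem_filter, mem_neighborFinset] at ha hb
  have := hheavy a v b ha.1.symm hb.1 hab
  omega

/-- The final charge `4 * G.degree v - 24 - out + in` of `v` is nonnegative (stated without
subtraction in `ℕ`). -/
theorem le_charge_after_discharging (hdeg : ∀ v, 5 ≤ G.degree v)
    (hheavy : ∀ x y z, G.Adj x y → G.Adj y z → x ≠ z → 17 < G.degree x + G.degree y + G.degree z)
    (v : V) : 24 + #{u | G.SendsCharge v u} ≤ 4 * G.degree v + #{u | G.SendsCharge u v} := by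
  have hout_le : #{u | G.SendsCharge v u} ≤ G.degree v := by
    rw [← card_neighborFinset_eq_degree]
    exact card_le_card fun u hu => (mem_neighborFinset ..).2 (mem_filter.1 hu).2.1
  have hout_zero (h : G.degree v < 7) : #{u | G.SendsCharge v u} = 0 :=
    card_eq_zero.2 (filter_eq_empty_iff.2 fun u _ hu => by have := hu.2.1; omega)
  rcases (by have := hdeg v; omega : G.degree v = 5 ∨ G.degree v = 6 ∨ G.degree v = 7 ∨
    8 ≤ G.degree v) with h | h | h | h
  · have hlight := card_neighborFinset_filter_degree_le_le_one hheavy (v := v) (k := 6) (by omega)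
    have hsplit := card_filter_add_card_filter_not (s := G.neighborFinset v)
      (fun u => G.degree u ≤ 6)
    have hin : #{u ∈ G.neighborFinset v | ¬ G.degree u ≤ 6} ≤ #{u | G.SendsCharge u v} :=
      card_le_card fun u hu => by
        simp only [mem_filter, mem_neighborFinset, mem_univ, true_and] at hu ⊢
        exact ⟨hu.1.symm, by omega, h⟩
    rw [card_neighborFinset_eq_degree] at hsplit
    rw [hout_zero (by omega)]
    omega
  · rw [hout_zero (by omega)]
    omega
  · have hout_le_one : #{u | G.SendsCharge v u} ≤ 1 :=
      (card_le_card fun u hu => by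
        simp only [mem_filter, mem_neighborFinset, mem_univ, true_and] at hu ⊢
        exact ⟨hu.1, hu.2.2.le⟩).trans
      (card_neighborFinset_filter_degree_le_le_one hheavy (v := v) (k := 5) (by omega))
    omega
  · omega

theorem exists_adj_adj_degree_add_degree_add_degree_le (hdeg : ∀ v, 5 ≤ G.degree v)
    (hE : #G.edgeFinset < 3 * Fintype.card V) :
    ∃ x y z, G.Adj x y ∧ G.Adj y z ∧ x ≠ z ∧ G.degree x + G.degree y + G.degree z ≤ 17 := by
  by_contra! hheavy
  have hcharge := sum_le_sum fun v (_ : v ∈ univ) => le_charge_after_discharging hdeg hheavy v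
  have hflow : ∑ v, #{u | G.SendsCharge v u} = ∑ v, #{u | G.SendsCharge u v} :=
    sum_card_bipartiteAbove_eq_sum_card_bipartiteBelow G.SendsCharge
  rw [sum_add_distrib, sum_add_distrib, hflow, ← mul_sum, sum_degrees_eq_twice_card_edges,
    sum_const, card_univ, smul_eq_mul] at hcharge
  omega

end SimpleGraph

/-- the Roman bondage number of a planar graph with `δ(G) = 5` is at most 14. -/
theorem statement_16 {V : Type*} [Fintype V] [DecidableEq V] (G : SimpleGraph V)
    [DecidableRel G.Adj] (hplanar : G.IsPlanar) (hδ : G.minDegree = 5) :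
    G.romanBondageNumber ≤ 14 := by
  have hdeg : ∀ v, 5 ≤ G.degree v := fun v => hδ ▸ G.minDegree_le_degree v
  have : Nonempty V := not_isEmpty_iff.1 fun _ => by simp [minDegree_of_subsingleton] at hδ
  have hE := hplanar.card_edgeFinset_add_six_le fun v => (hdeg v).trans_lt' (by norm_num)
  obtain ⟨x, y, z, hxy, hyz, hxz, hlight⟩ :=
    exists_adj_adj_degree_add_degree_add_degree_le hdeg (by omega)
  have := romanBondageNumber_le_degree_add_degree_add_degree_sub_three hxy hyz hxz
  omega
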